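/- Let (M,τ) be a tracial W*-probability space, X = (X₁,…,Xₙ) self-adjoint elements of M, and suppose ξ₁,…,ξₙ ∈ L²(M,τ) satisfy the conjugate relations (τ⊗τ)((∂_j P)(X)) = τ(ξ_j · P(X)) for all P ∈ ℂ⟨Z₁,…,Zₙ⟩ and all j. Then for each j, P ∈ I¹_X implies ∂_j P ∈ I²_X, where I¹_X = {P : P(X)=0} and I²_X = {Q ∈ ℂ⟨Z⟩⊗ℂ⟨Z⟩ : Q(X)=0}; consequently ∂_j descends to a well-defined derivation ℂ⟨Z⟩/I¹_X → (ℂ⟨Z⟩⊗ℂ⟨Z⟩)/I²_X. -/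

import Mathlib

/-!
If `P(X) = 0`, the Leibniz rule gives `(∂_j (Q P R))(X) = (Q ⊗ 1)(∂_j P)(X)(1 ⊗ R)` for all
`Q, R`, and the conjugate relation makes its `τ ⊗ τ` vanish because `(Q P R)(X) = 0`. Thus
`(∂_j P)(X)`, an element of `A ⊗ A` for `A = ℂ⟨X⟩`, is killed by all functionals
`τ(Q(X) ·) ⊗ τ(· R(X))`. Since `A` is a *-algebra on which `τ` is faithful, these functionals
separate the points of `A`, hence their tensor products separate the points of `A ⊗ A`.
-/

open scoped TensorProduct InnerProductSpace
noncomputable section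

/-- The free noncommutative polynomial algebra ℂ⟨Z₁,…,Zₙ⟩. -/
abbrev FA (n : ℕ) := FreeAlgebra ℂ (Fin n)

/-- `D` is the free difference quotient ∂_j: the derivation into the tensor square with
`∂_j Z_i = δ_{ij} 1⊗1`. -/
def IsFDQ {n : ℕ} (j : Fin n) (D : FA n →ₗ[ℂ] FA n ⊗[ℂ] FA n) : Prop :=
  (∀ P Q : FA n, D (P * Q) = D P * (1 ⊗ₜ[ℂ] Q) + (P ⊗ₜ[ℂ] 1) * D Q) ∧
  (∀ i : Fin n, D (FreeAlgebra.ι ℂ i) = if i = j then (1 : FA n) ⊗ₜ[ℂ] (1 : FA n) else 0)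

variable {H : Type} [NormedAddCommGroup H] [InnerProductSpace ℂ H] [CompleteSpace H]

/-- The vector state `τ(a) = ⟨Ω, aΩ⟩` (the trace, in standard form). -/
def trVec (Ω : H) : (H →L[ℂ] H) →ₗ[ℂ] ℂ where
  toFun a := ⟪Ω, a Ω⟫_ℂ
  map_add' a b := by simp [inner_add_right]
  map_smul' c a := by simp [inner_smul_right]

/-- `τ ⊗ τ` on the (algebraic) tensor square of B(H). -/
def ttB (Ω : H) : ((H →L[ℂ] H) ⊗[ℂ] (H →L[ℂ] H)) →ₗ[ℂ] ℂ :=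
  TensorProduct.lift ((LinearMap.mul ℂ ℂ).compl₁₂ (trVec Ω) (trVec Ω))

/-- The partial trace `τ ⊗ id`. -/
def tid (Ω : H) : ((H →L[ℂ] H) ⊗[ℂ] (H →L[ℂ] H)) →ₗ[ℂ] (H →L[ℂ] H) :=
  TensorProduct.lift ((LinearMap.lsmul ℂ (H →L[ℂ] H)) ∘ₗ (trVec Ω))

/-- The partial trace `id ⊗ τ`. -/
def idt (Ω : H) : ((H →L[ℂ] H) ⊗[ℂ] (H →L[ℂ] H)) →ₗ[ℂ] (H →L[ℂ] H) :=
  TensorProduct.lift ((LinearMap.lsmul ℂ (H →L[ℂ] H)) ∘ₗ (trVec Ω)).flip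

/-- Evaluation `ev_X : ℂ⟨Z₁,…,Zₙ⟩ → B(H)`, `Z_i ↦ X_i`. -/
def ev {n : ℕ} (X : Fin n → (H →L[ℂ] H)) : FA n →ₐ[ℂ] (H →L[ℂ] H) :=
  FreeAlgebra.lift ℂ X

/-- `ev_X ⊗ ev_X` on the tensor square. -/
def evT {n : ℕ} (X : Fin n → (H →L[ℂ] H)) :
    (FA n ⊗[ℂ] FA n) →ₐ[ℂ] ((H →L[ℂ] H) ⊗[ℂ] (H →L[ℂ] H)) :=
  Algebra.TensorProduct.map (ev X) (ev X)

/-- The von Neumann algebra `vN(X₁,…,Xₙ)` generated by the `X_i`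
(double commutant of the self-adjoint family). -/
def vNX {n : ℕ} (X : Fin n → (H →L[ℂ] H)) : Set (H →L[ℂ] H) :=
  Set.centralizer (Set.centralizer (Set.range X))

namespace TensorProduct

variable {R V W V' W' : Type*} [CommSemiring R] [AddCommMonoid V] [Module R V] [AddCommMonoid W]
  [Module R W] [AddCommMonoid V'] [Module R V'] [AddCommMonoid W'] [Module R W']

lemma equivFinsuppOfBasisLeft_lTensor_apply {ι : Type*} [DecidableEq ι] (b : Module.Basis ι R V)
    (g : W →ₗ[R] W') (x : V ⊗[R] W) (i : ι) :
    equivFinsuppOfBasisLeft b (g.lTensor V x) i = g (equivFinsuppOfBasisLeft b x i) := by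
  induction x using TensorProduct.induction_on <;> simp_all

theorem map_eq_zero_of_separates_right [Module.Free R V'] {ι : Type*} (f : V →ₗ[R] V')
    (g : W →ₗ[R] W') (s : ι → Module.Dual R W) (hs : ∀ w, (∀ i, s i w = 0) → g w = 0)
    (u : V ⊗[R] W) (hu : ∀ i, map f (s i) u = 0) : map f g u = 0 := by
  classical
  let b := Module.Free.chooseBasis R V'
  rw [← LinearMap.lTensor_comp_rTensor, LinearMap.comp_apply,
    ← (equivFinsuppOfBasisLeft b).map_eq_zero_iff]
  refine Finsupp.ext fun k => ?_
  rw [equivFinsuppOfBasisLeft_lTensor_apply, Finsupp.zero_apply]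
  refine hs _ fun i => ?_
  have := congr(equivFinsuppOfBasisLeft b $(hu i) k)
  rwa [← LinearMap.lTensor_comp_rTensor, LinearMap.comp_apply,
    equivFinsuppOfBasisLeft_lTensor_apply, map_zero, Finsupp.zero_apply] at this

theorem map_eq_zero_of_separates_left [Module.Free R W'] {ι : Type*} (f : V →ₗ[R] V')
    (g : W →ₗ[R] W') (s : ι → Module.Dual R V) (hs : ∀ v, (∀ i, s i v = 0) → f v = 0)
    (u : V ⊗[R] W) (hu : ∀ i, map (s i) g u = 0) : map f g u = 0 := by
  have := map_eq_zero_of_separates_right g f s hs (TensorProduct.comm R V W u) fun i => by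
    rw [map_comm, hu, map_zero]
  rwa [map_comm, LinearEquiv.map_eq_zero_iff] at this

end TensorProduct

lemma TensorProduct.map_comp_mulLeft_comp_mulRight {R A M N : Type*} [CommSemiring R] [Semiring A]
    [Algebra R A] [AddCommMonoid M] [Module R M] [AddCommMonoid N] [Module R N]
    (f : A →ₗ[R] M) (g : A →ₗ[R] N) (a b : A) (w : A ⊗[R] A) :
    map (f ∘ₗ LinearMap.mulLeft R a) (g ∘ₗ LinearMap.mulRight R b) w =
      map f g ((a ⊗ₜ 1) * w * (1 ⊗ₜ b)) := by
  induction w using TensorProduct.induction_on <;> simp_all [mul_add, add_mul]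

lemma Algebra.TensorProduct.map_apply_mul_mul_of_apply_eq_zero {R A B : Type*} [CommSemiring R]
    [Semiring A] [Algebra R A] [Semiring B] [Algebra R B] (e : A →ₐ[R] B)
    (D : A →ₗ[R] A ⊗[R] A) (hD : ∀ P Q, D (P * Q) = D P * (1 ⊗ₜ Q) + (P ⊗ₜ 1) * D Q)
    {P : A} (hP : e P = 0) (a b : A) :
    map e e (D (a * P * b)) = map e e ((a ⊗ₜ 1) * D P * (1 ⊗ₜ b)) := by
  simp [hD, hP, add_mul]

section Evaluation

variable {n : ℕ} (Ω : H) (X : Fin n → (H →L[ℂ] H))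

lemma range_ev_eq_adjoin (hXsa : ∀ i, IsSelfAdjoint (X i)) :
    (ev X).range = (StarAlgebra.adjoin ℂ (Set.range X)).toSubalgebra := by
  have : star (Set.range X) = Set.range X := by
    ext x
    refine exists_congr fun i => ?_
    rw [eq_star_iff_eq_star, (hXsa i).star_eq, eq_comm]
  rw [ev, ← Algebra.adjoin_range_eq_range_freeAlgebra_lift, StarAlgebra.adjoin_toSubalgebra, this,
    Set.union_self]

lemma ev_mem {M : VonNeumannAlgebra H} (hXM : ∀ i, X i ∈ M) (P : FA n) : ev X P ∈ M := by
  have : (ev X).range ≤ M.toStarSubalgebra.toSubalgebra := by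
    rw [ev, ← Algebra.adjoin_range_eq_range_freeAlgebra_lift, Algebra.adjoin_le_iff]
    rintro _ ⟨i, rfl⟩
    exact hXM i
  exact this ⟨P, rfl⟩

lemma exists_ev_eq_star (hXsa : ∀ i, IsSelfAdjoint (X i)) (P : FA n) :
    ∃ Q, ev X Q = star (ev X P) := by
  have hP : ev X P ∈ StarAlgebra.adjoin ℂ (Set.range X) := by
    rw [← StarSubalgebra.mem_toSubalgebra, ← range_ev_eq_adjoin X hXsa]
    exact ⟨P, rfl⟩
  have hstar : star (ev X P) ∈ (ev X).range := by
    rw [range_ev_eq_adjoin X hXsa, StarSubalgebra.mem_toSubalgebra]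
    exact star_mem hP
  exact hstar

def law : FA n →ₗ[ℂ] ℂ := trVec Ω ∘ₗ (ev X).toLinearMap

omit [CompleteSpace H] in
lemma ttB_evT (w : FA n ⊗[ℂ] FA n) :
    ttB Ω (evT X w) = TensorProduct.lid ℂ ℂ (TensorProduct.map (law Ω X) (law Ω X) w) := by
  induction w using TensorProduct.induction_on <;> simp_all [ttB, evT, law]

variable {Ω X} {M : VonNeumannAlgebra H}

lemma ev_eq_zero_of_forall_law_mul_left
    (hfaith : ∀ a : H →L[ℂ] H, a ∈ M → trVec Ω (star a * a) = 0 → a = 0)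
    (hXM : ∀ i, X i ∈ M) (hXsa : ∀ i, IsSelfAdjoint (X i))
    {P : FA n} (h : ∀ Q, law Ω X (Q * P) = 0) :
    ev X P = 0 := by
  obtain ⟨Q, hQ⟩ := exists_ev_eq_star X hXsa P
  refine hfaith _ (ev_mem X hXM P) ?_
  rw [← hQ, ← map_mul]
  exact h Q

lemma ev_eq_zero_of_forall_law_mul_right
    (hfaith : ∀ a : H →L[ℂ] H, a ∈ M → trVec Ω (star a * a) = 0 → a = 0)
    (hXM : ∀ i, X i ∈ M) (hXsa : ∀ i, IsSelfAdjoint (X i))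
    {P : FA n} (h : ∀ R, law Ω X (P * R) = 0) :
    ev X P = 0 := by
  obtain ⟨R, hR⟩ := exists_ev_eq_star X hXsa P
  rw [← star_eq_zero]
  refine hfaith _ (star_mem (ev_mem X hXM P)) ?_
  rw [star_star, ← hR, ← map_mul]
  exact h R

end Evaluation

theorem fdq_descends_to_quotient_general
    {n : ℕ} (M : VonNeumannAlgebra H) (Ω : H)
    -- τ := trVec Ω is a state (‖Ω‖ = 1), Ω is cyclic (H is the standard form L²(M,τ)),
    -- τ is tracial and faithful on M:
    (hfaith : ∀ a : H →L[ℂ] H, a ∈ M → trVec Ω (star a * a) = 0 → a = 0)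
    -- self-adjoint generators X₁,…,Xₙ in M:
    (X : Fin n → (H →L[ℂ] H)) (hXM : ∀ i, X i ∈ M) (hXsa : ∀ i, IsSelfAdjoint (X i))
    -- the free difference quotients:
    (D : Fin n → (FA n →ₗ[ℂ] FA n ⊗[ℂ] FA n)) (hD : ∀ j, IsFDQ j (D j))
    -- ξ₁,…,ξₙ ∈ L²(M,τ) satisfy the conjugate relations
    -- (τ⊗τ)((∂_j P)(X)) = τ(ξ_j · P(X)) for all P:
    (ξ : Fin n → H)
    (hconj : ∀ j, ∀ P : FA n, ttB Ω (evT X (D j P)) = ⟪(star (ev X P)) Ω, ξ j⟫_ℂ)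
    (j : Fin n) :
    (∀ P : FA n, ev X P = 0 → evT X (D j P) = 0) ∧
    (∃ Dbar : (FA n ⧸ LinearMap.ker (ev X).toLinearMap) →ₗ[ℂ]
        ((FA n ⊗[ℂ] FA n) ⧸ LinearMap.ker (evT X).toLinearMap),
      ∀ P : FA n,
        Dbar (Submodule.Quotient.mk P) = Submodule.Quotient.mk (D j P)) := by
  have hker : ∀ P : FA n, ev X P = 0 → evT X (D j P) = 0 := by
    intro P hP
    have hpair : ∀ Q R, TensorProduct.map (law Ω X ∘ₗ LinearMap.mulLeft ℂ Q)
        (law Ω X ∘ₗ LinearMap.mulRight ℂ R) (D j P) = 0 := by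
      intro Q R
      rw [TensorProduct.map_comp_mulLeft_comp_mulRight, ← LinearEquiv.map_eq_zero_iff
        (TensorProduct.lid ℂ ℂ), ← ttB_evT, evT,
        ← Algebra.TensorProduct.map_apply_mul_mul_of_apply_eq_zero _ _ (hD j).1 hP, ← evT,
        hconj, map_mul, map_mul, hP]
      simp
    exact TensorProduct.map_eq_zero_of_separates_right _ _ _
      (fun _ h => ev_eq_zero_of_forall_law_mul_right hfaith hXM hXsa h) _ fun R =>
        TensorProduct.map_eq_zero_of_separates_left _ _ _
          (fun _ h => ev_eq_zero_of_forall_law_mul_left hfaith hXM hXsa h) _ fun Q => hpair Q R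
  exact ⟨hker, Submodule.mapQ _ _ (D j) fun P hP => hker P hP, fun _ => rfl⟩

theorem fdq_descends_to_quotient
    {n : ℕ} (M : VonNeumannAlgebra H) (Ω : H)
    -- τ := trVec Ω is a state (‖Ω‖ = 1), Ω is cyclic (H is the standard form L²(M,τ)),
    -- τ is tracial and faithful on M:
    (hΩ : ‖Ω‖ = 1)
    (hcyc : Dense {x : H | ∃ a : H →L[ℂ] H, a ∈ M ∧ a Ω = x})
    (htr : ∀ a b : H →L[ℂ] H, a ∈ M → b ∈ M → trVec Ω (a * b) = trVec Ω (b * a))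
    (hfaith : ∀ a : H →L[ℂ] H, a ∈ M → trVec Ω (star a * a) = 0 → a = 0)
    -- self-adjoint generators X₁,…,Xₙ in M:
    (X : Fin n → (H →L[ℂ] H)) (hXM : ∀ i, X i ∈ M) (hXsa : ∀ i, IsSelfAdjoint (X i))
    -- the free difference quotients:
    (D : Fin n → (FA n →ₗ[ℂ] FA n ⊗[ℂ] FA n)) (hD : ∀ j, IsFDQ j (D j))
    -- ξ₁,…,ξₙ ∈ L²(M,τ) satisfy the conjugate relations
    -- (τ⊗τ)((∂_j P)(X)) = τ(ξ_j · P(X)) for all P: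
    (ξ : Fin n → H)
    (hconj : ∀ j, ∀ P : FA n, ttB Ω (evT X (D j P)) = ⟪(star (ev X P)) Ω, ξ j⟫_ℂ)
    (j : Fin n) :
    (∀ P : FA n, ev X P = 0 → evT X (D j P) = 0) ∧
    (∃ Dbar : (FA n ⧸ LinearMap.ker (ev X).toLinearMap) →ₗ[ℂ]
        ((FA n ⊗[ℂ] FA n) ⧸ LinearMap.ker (evT X).toLinearMap),
      ∀ P : FA n,
        Dbar (Submodule.Quotient.mk P) = Submodule.Quotient.mk (D j P)) :=
  fdq_descends_to_quotient_general M Ω hfaith X hXM hXsa D hD ξ hconj j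

end
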